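/- Every star-Lindelöf space of cardinality less than 𝔡 is star-Scheepers. -/

import Mathlib

open Set

/-- The dominating number 𝔡: least cardinality of a dominating family in ℕ^ℕ. -/
noncomputable def dominatingNumber : Cardinal :=
  sInf { c | ∃ D : Set (ℕ → ℕ),
    (∀ g : ℕ → ℕ, ∃ f ∈ D, ∀ᶠ n in Filter.atTop, g n ≤ f n) ∧ c = Cardinal.mk D }

/-- `U` is an open cover of the space `X`. -/
def IsOpenCover {X : Type u} [TopologicalSpace X] (U : Set (Set X)) : Prop :=
  (∀ u ∈ U, IsOpen u) ∧ ⋃₀ U = Set.univ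

/-- The star of a set `A` with respect to a family `U`. -/
def starOf {X : Type*} (A : Set X) (U : Set (Set X)) : Set X :=
  ⋃₀ {B | B ∈ U ∧ (A ∩ B).Nonempty}

/-- The star-Scheepers property (ω-cover form). -/
def StarScheepers (X : Type*) [TopologicalSpace X] : Prop :=
  ∀ U : ℕ → Set (Set X), (∀ n, IsOpenCover (U n)) →
    ∃ V : ℕ → Set (Set X), (∀ n, V n ⊆ U n ∧ (V n).Finite) ∧
      ∀ F : Set X, F.Finite → ∃ n, F ⊆ starOf (⋃₀ V n) (U n)

/-- The strongly star-Scheepers property. -/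
def StronglyStarScheepers (X : Type*) [TopologicalSpace X] : Prop :=
  ∀ U : ℕ → Set (Set X), (∀ n, IsOpenCover (U n)) →
    ∃ F : ℕ → Set X, (∀ n, (F n).Finite) ∧
      ∀ G : Set X, G.Finite → ∃ n, G ⊆ starOf (F n) (U n)

lemma dom_set_nonempty : { c | ∃ D : Set (ℕ → ℕ),
    (∀ g : ℕ → ℕ, ∃ f ∈ D, ∀ᶠ n in Filter.atTop, g n ≤ f n) ∧ c = Cardinal.mk D }.Nonempty := by
  exact ⟨_, Set.univ, fun g => ⟨g, trivial, Filter.Eventually.of_forall fun n => le_rfl⟩, rfl⟩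

lemma aleph0_lt_dominatingNumber : Cardinal.aleph0 < dominatingNumber := by
  have hmem := csInf_mem dom_set_nonempty
  obtain ⟨D, hD, hc⟩ := hmem
  rw [dominatingNumber, hc]
  by_contra h
  push_neg at h
  have hcount : D.Countable := Cardinal.mk_le_aleph0_iff.mp h
  have hne : D.Nonempty := by
    obtain ⟨f, hf, -⟩ := hD 0
    exact ⟨f, hf⟩
  obtain ⟨e, he⟩ := hcount.exists_eq_range hne
  set g : ℕ → ℕ := fun n => (Finset.range (n+1)).sup (fun i => e i n) + 1 with hg
  obtain ⟨f, hfD, hfg⟩ := hD g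
  rw [he] at hfD
  obtain ⟨i, rfl⟩ := hfD
  obtain ⟨n, hn1, hn2⟩ := (hfg.and (Filter.eventually_ge_atTop i)).exists
  have : e i n ≤ (Finset.range (n+1)).sup (fun j => e j n) :=
    Finset.le_sup (f := fun j => e j n) (Finset.mem_range.mpr (Nat.lt_succ_of_le hn2))
  simp only [hg] at hn1
  omega


universe u

lemma list_toFinset_surj {α : Type u} [DecidableEq α] :
    Function.Surjective (List.toFinset : List α → Finset α) :=
  fun s => ⟨s.toList, by simp⟩



theorem stmt_2 {X : Type u} [TopologicalSpace X]
    (hSL : ∀ U : Set (Set X), IsOpenCover U →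
      ∃ V ⊆ U, V.Countable ∧ starOf (⋃₀ V) U = Set.univ)
    (hcard : Cardinal.lift.{0} (Cardinal.mk X) < Cardinal.lift.{u} dominatingNumber) :
    ∀ U : ℕ → Set (Set X), (∀ n, IsOpenCover (U n)) →
      ∃ V : ℕ → Set (Set X), (∀ n, V n ⊆ U n ∧ (V n).Finite) ∧
        ((∀ F : Set X, F.Finite → ∃ n, F ⊆ starOf (⋃₀ V n) (U n)) ∨
          ∃ n, starOf (⋃₀ V n) (U n) = Set.univ) := by
  classical
  intro U hU
  rcases isEmpty_or_nonempty X with hX | hX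
  · refine ⟨fun _ => ∅, fun n => ⟨empty_subset _, finite_empty⟩, Or.inl ?_⟩
    intro F hF
    exact ⟨0, by rw [Set.eq_empty_of_isEmpty F]; exact empty_subset _⟩
  have hV : ∀ n, ∃ V ⊆ U n, V.Countable ∧ starOf (⋃₀ V) (U n) = Set.univ :=
    fun n => hSL (U n) (hU n)
  choose V hVsub hVcnt hVstar using hV
  have hVne : ∀ n, (V n).Nonempty := by
    intro n
    by_contra h
    rw [Set.not_nonempty_iff_eq_empty] at h
    have hx : (Classical.arbitrary X) ∈ starOf (⋃₀ V n) (U n) := by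
      rw [hVstar n]; trivial
    rw [h] at hx
    simp [starOf] at hx
  choose e he using fun n => (hVcnt n).exists_eq_range (hVne n)
  have hkey : ∀ x : X, ∀ n, ∃ k, ∃ B, B ∈ U n ∧ x ∈ B ∧ (e n k ∩ B).Nonempty := by
    intro x n
    have hx : x ∈ starOf (⋃₀ V n) (U n) := by rw [hVstar n]; trivial
    obtain ⟨Bx, ⟨hBU, y, hy1, hy2⟩, hxB⟩ := hx
    obtain ⟨s, hsV, hys⟩ := hy1
    rw [he n] at hsV
    obtain ⟨k, rfl⟩ := hsV
    exact ⟨k, Bx, hBU, hxB, y, hys, hy2⟩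
  choose f B hBU hxB hmeet using hkey
  set fF : Finset X → ℕ → ℕ := fun F n => F.sup (fun x => f x n) with hfF
  set D : Set (ℕ → ℕ) := Set.range fF with hD
  have hDlt : Cardinal.mk D < dominatingNumber := by
    rw [← Cardinal.lift_lt.{0, u}]
    calc Cardinal.lift.{u} (Cardinal.mk D)
        ≤ Cardinal.lift.{0} (Cardinal.mk (Finset X)) := Cardinal.mk_range_le_lift
      _ ≤ Cardinal.lift.{0} (Cardinal.mk (List X)) :=
          Cardinal.lift_le.mpr (Cardinal.mk_le_of_surjective list_toFinset_surj)
      _ ≤ Cardinal.lift.{0} (max Cardinal.aleph0 (Cardinal.mk X)) :=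
          Cardinal.lift_le.mpr (Cardinal.mk_list_le_max X)
      _ = max Cardinal.aleph0 (Cardinal.lift.{0} (Cardinal.mk X)) := by
          rw [Cardinal.lift_max, Cardinal.lift_aleph0]
      _ < Cardinal.lift.{u} dominatingNumber := by
          apply max_lt ?_ hcard
          have := Cardinal.lift_lt.{0, u}.mpr aleph0_lt_dominatingNumber
          rwa [Cardinal.lift_aleph0] at this
  have hnd : ¬ (∀ g : ℕ → ℕ, ∃ h ∈ D, ∀ᶠ n in Filter.atTop, g n ≤ h n) := by
    intro hdom
    have : dominatingNumber ≤ Cardinal.mk D := csInf_le' ⟨D, hdom, rfl⟩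
    exact absurd hDlt (not_lt.mpr this)
  push_neg at hnd
  obtain ⟨g, hg⟩ := hnd
  refine ⟨fun n => e n '' {k | k ≤ g n}, fun n => ⟨?_, ?_⟩, Or.inl ?_⟩
  · rintro s ⟨k, -, rfl⟩
    exact hVsub n (by rw [he n]; exact Set.mem_range_self k)
  · exact (Set.finite_Iic (g n)).image _
  · intro F hF
    have h1 := hg (fF hF.toFinset) ⟨hF.toFinset, rfl⟩
    obtain ⟨n, hn⟩ := h1.exists
    refine ⟨n, fun x hx => ?_⟩
    have hfx : f x n ≤ g n := by
      have h2 : f x n ≤ fF hF.toFinset n :=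
        Finset.le_sup (f := fun y => f y n) (hF.mem_toFinset.mpr hx)
      omega
    obtain ⟨y, hy1, hy2⟩ := hmeet x n
    exact ⟨B x n, ⟨hBU x n, y, ⟨e n (f x n), ⟨f x n, hfx, rfl⟩, hy1⟩, hy2⟩, hxB x n⟩
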